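/- Let G = (V,E) be a finite connected simple graph with nullity n = |E| - |V| + 1, and let ξ be a nonzero real number. Then Σ_{s ⊆ E} Π_{i ∈ V} f_{deg_s(i)}(ξ - ξ^{-1}) = ξ^{1-n}·(ξ+ξ^{-1})^{n-1} + ξ^{n-1}·(ξ+ξ^{-1})^{n-1}, where all powers with exponents 1-n and n-1 are integer powers (zpow). -/

import Mathlib

open Polynomial

/-- The polynomials `f₀ = 1`, `f₁ = 0`, `f_{n+1}(x) = x·f_n(x) + f_{n-1}(x)`. -/
noncomputable def isingF : ℕ → Polynomial ℤ
  | 0 => 1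
  | 1 => 0
  | n + 2 => X * isingF (n + 1) + isingF n

/-- The degree of vertex `i` in the spanning subgraph `(V, s)`. -/
def degIn {V : Type*} [DecidableEq V] (s : Finset (Sym2 V)) (i : V) : ℕ :=
  (s.filter (fun e => i ∈ e)).card

/-
With `α = ξ` and `β = -ξ⁻¹` we have `α + β = ξ - ξ⁻¹`, `α - β = ξ + ξ⁻¹` and `αβ = -1`, and then
`(α - β) f_d(α + β) = α β^d - β α^d` (Binet). Expanding `∏ᵢ (α β^{dᵢ} - β α^{dᵢ})` chooses a set `T`
of vertices carrying the `α`-term; the weight `∏ᵢ γᵢ^{deg_s i}` with `γ = α` on `T` and `β` off `T` is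
`∏_{uv ∈ s} γᵤ γᵥ`, so the sum over `s ⊆ E` factors as `∏_{uv ∈ E} (1 + γᵤ γᵥ)`. An edge leaving `T`
contributes `1 + αβ = 0`, so for connected `G` only `T = ∅` and `T = V` survive, giving
`(ξ + ξ⁻¹)^|V| Z = ξ^|V| (1 + ξ⁻²)^|E| + ξ^{-|V|} (1 + ξ²)^|E|`.
-/

open Finset

theorem sub_mul_aeval_isingF {R : Type*} [CommRing R] {α β : R} (h : α * β = -1) (d : ℕ) :
    (α - β) * aeval (α + β) (isingF d) = α * β ^ d - β * α ^ d := by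
  induction d using Nat.twoStepInduction with
  | zero => simp [isingF]
  | one => simp [isingF, mul_comm]
  | more d ih ih1 =>
    simp only [isingF, map_add, map_mul, aeval_X] at ih1 ⊢
    linear_combination (α + β) * ih1 + ih + (α * β ^ d - β * α ^ d) * h

section

variable {V : Type*} [Fintype V] [DecidableEq V]

theorem prod_pow_degIn {M : Type*} [CommMonoid M] (γ : V → M) (s : Finset (Sym2 V)) :
    ∏ i, γ i ^ degIn s i = ∏ e ∈ s, ∏ i with i ∈ e, γ i := by
  simp_rw [degIn, ← prod_const, prod_filter]
  exact prod_comm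

theorem sum_powerset_prod_pow_degIn {R : Type*} [CommSemiring R] (γ : V → R)
    (E : Finset (Sym2 V)) :
    ∑ s ∈ E.powerset, ∏ i, γ i ^ degIn s i = ∏ e ∈ E, (1 + ∏ i with i ∈ e, γ i) := by
  simp_rw [prod_pow_degIn, prod_one_add]

theorem prod_filter_mem_mk {M : Type*} [CommMonoid M] (γ : V → M) {u v : V} (huv : u ≠ v) :
    ∏ i with i ∈ s(u, v), γ i = γ u * γ v := by
  rw [show ({i | i ∈ s(u, v)} : Finset V) = {u, v} by ext; simp, prod_pair huv]

variable {G : SimpleGraph V} [DecidableRel G.Adj]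

theorem prod_filter_mem_edge_const {M : Type*} [CommMonoid M] (c : M) {e : Sym2 V}
    (he : e ∈ G.edgeFinset) : ∏ i with i ∈ e, c = c ^ 2 := by
  induction e using Sym2.ind with
  | h u v => rw [prod_filter_mem_mk _ (G.mem_edgeFinset.1 he).ne, sq]

theorem prod_one_add_prod_ite_mem_eq_zero {R : Type*} [CommRing R] (hG : G.Preconnected)
    {α β : R} (h : α * β = -1) {T : Finset V} (hT : T.Nonempty) (hT' : T ≠ univ) :
    ∏ e ∈ G.edgeFinset, (1 + ∏ i with i ∈ e, if i ∈ T then α else β) = 0 := by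
  obtain ⟨u, hu⟩ := hT
  obtain ⟨v, hv⟩ : ∃ v, v ∉ T := by simpa [eq_univ_iff_forall] using hT'
  obtain ⟨d, -, hd, hd'⟩ := (hG u v).some.exists_boundary_dart (T : Set V) hu hv
  refine prod_eq_zero (G.mem_edgeFinset.2 (G.mem_edgeSet.2 d.adj)) ?_
  rw [prod_filter_mem_mk _ d.adj.ne, if_pos (mem_coe.1 hd), if_neg (mt mem_coe.2 hd'), h,
    add_neg_cancel]

theorem prod_sub_mul_eq_sum_powerset {R : Type*} [CommRing R] (α β : R) (d : V → ℕ) :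
    ∏ i, (α * β ^ d i - β * α ^ d i)
      = ∑ T ∈ univ.powerset, (-β) ^ #T * α ^ #(univ \ T) *
          ∏ i, (if i ∈ T then α else β) ^ d i := by
  simp_rw [sub_eq_neg_add, prod_add]
  refine sum_congr rfl fun T _ => ?_
  have hpiece : ∏ i, (if i ∈ T then α else β) ^ d i
      = ∏ i, T.piecewise (fun i => α ^ d i) (fun i => β ^ d i) i :=
    prod_congr rfl fun i _ => ite_pow ..
  rw [hpiece, prod_piecewise, univ_inter]
  simp_rw [← neg_mul, prod_mul_distrib, prod_const]
  ring

theorem sub_pow_card_mul_sum_isingF {R : Type*} [CommRing R] (hG : G.Connected) {α β : R}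
    (h : α * β = -1) :
    (α - β) ^ Fintype.card V *
        ∑ s ∈ G.edgeFinset.powerset, ∏ i, aeval (α + β) (isingF (degIn s i))
      = α ^ Fintype.card V * (1 + β ^ 2) ^ #G.edgeFinset
        + (-β) ^ Fintype.card V * (1 + α ^ 2) ^ #G.edgeFinset := by
  have : Nonempty V := hG.nonempty
  have expand (s : Finset (Sym2 V)) :
      (α - β) ^ Fintype.card V * ∏ i, aeval (α + β) (isingF (degIn s i))
        = ∑ T ∈ univ.powerset, (-β) ^ #T * α ^ #(univ \ T) *
            ∏ i, (if i ∈ T then α else β) ^ degIn s i := by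
    rw [← card_univ, ← prod_const, ← prod_mul_distrib]
    simp_rw [sub_mul_aeval_isingF h]
    exact prod_sub_mul_eq_sum_powerset ..
  rw [mul_sum, sum_congr rfl fun s _ => expand s, sum_comm]
  simp_rw [← mul_sum, sum_powerset_prod_pow_degIn]
  rw [← sum_subset (s₁ := {∅, univ}) (by simp) fun T _ hT => ?_,
    sum_pair univ_nonempty.ne_empty.symm]
  · simp only [notMem_empty, mem_univ, if_false, if_true, card_empty, card_univ, sdiff_empty,
      sdiff_self, bot_eq_empty]
    rw [prod_congr rfl fun e he => congrArg (1 + ·) (prod_filter_mem_edge_const β he),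
      prod_congr rfl fun e he => congrArg (1 + ·) (prod_filter_mem_edge_const α he),
      prod_const, prod_const]
    ring
  · simp only [mem_insert, mem_singleton, not_or] at hT
    rw [prod_one_add_prod_ite_mem_eq_zero hG.preconnected h (nonempty_iff_ne_empty.2 hT.1) hT.2,
      mul_zero]

end

theorem theta_beta_one {V : Type*} [Fintype V] [DecidableEq V]
    (G : SimpleGraph V) [DecidableRel G.Adj] (hconn : G.Connected)
    (n : ℤ) (hn : n = (G.edgeFinset.card : ℤ) - (Fintype.card V : ℤ) + 1)
    (ξ : ℝ) (hξ : ξ ≠ 0) :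
    ∑ s ∈ G.edgeFinset.powerset, ∏ i : V, Polynomial.aeval (ξ - ξ⁻¹) (isingF (degIn s i))
      = ξ ^ (1 - n) * (ξ + ξ⁻¹) ^ (n - 1) + ξ ^ (n - 1) * (ξ + ξ⁻¹) ^ (n - 1) := by
  have hK : ξ + ξ⁻¹ ≠ 0 := by
    rw [show ξ + ξ⁻¹ = (ξ ^ 2 + 1) / ξ by field_simp]
    positivity
  have key := sub_pow_card_mul_sum_isingF hconn (α := ξ) (β := -ξ⁻¹) (by field_simp)
  rw [sub_neg_eq_add, ← sub_eq_add_neg, neg_neg, neg_sq,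
    show 1 + ξ⁻¹ ^ 2 = ξ⁻¹ * (ξ + ξ⁻¹) by field_simp,
    show 1 + ξ ^ 2 = ξ * (ξ + ξ⁻¹) by field_simp; ring, mul_pow, mul_pow] at key
  subst hn
  rw [show (#G.edgeFinset : ℤ) - Fintype.card V + 1 - 1 = #G.edgeFinset - Fintype.card V by ring,
    show 1 - ((#G.edgeFinset : ℤ) - Fintype.card V + 1) = Fintype.card V - #G.edgeFinset by ring,
    zpow_sub₀ hξ, zpow_sub₀ hξ, zpow_sub₀ hK]
  simp only [zpow_natCast]
  apply mul_left_cancel₀ (pow_ne_zero (Fintype.card V) hK)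
  rw [key, inv_pow, inv_pow]
  field_simp
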